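/- Let F' ⊆ ℕ^n be a set of exponent vectors with pairwise disjoint supports such that |α| ≥ 2 for every α ∈ F'. Suppose that for every i ∈ Fin n there exists m ∈ ℕ with m·e_i ∈ J_{F'} (combinatorially, the Thom–Sebastiani polynomial Σ_{α ∈ F'} x^α has an isolated critical point at the origin). Then ⋃_{α ∈ F'} [α] = Fin n, and every α ∈ F' is of the form m·e_i with m ≥ 2, or of the form m·e_i + e_j with m ≥ 1 and i ≠ j. -/

import Mathlib

/-- `δ(F)`: the set of all `α - e_i` for `α ∈ F` and `i` with `α i > 0`. -/
def deltaSet {n : ℕ} (F : Set (Fin n → ℕ)) : Set (Fin n → ℕ) :=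
  {γ | ∃ α ∈ F, ∃ i : Fin n, α i ≠ 0 ∧ γ = α - Pi.single i 1}

/-- `J_F`: the semigroup ideal of `ℕ^n` generated by `δ(F)`. -/
def semigroupIdeal {n : ℕ} (F : Set (Fin n → ℕ)) : Set (Fin n → ℕ) :=
  {β | ∃ γ ∈ deltaSet F, γ ≤ β}

/-- The degree `|α| = Σ_i α_i`. -/
def deg {n : ℕ} (α : Fin n → ℕ) : ℕ := ∑ i, α i

/-!
If `m • e_i ∈ J_{F'}` is witnessed by `α - e_k ≤ m • e_i`, then `α ≤ m • e_i + e_k`, so `α` lives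
on `{i, k}` with `α_k = 1` when `k ≠ i`; the degree bound `|α| ≥ 2` then leaves exactly the two
Brieskorn–Pham shapes, both with `α_i ≠ 0`. Hence every coordinate is covered, and by disjointness
of supports the exponent found for a coordinate `i` in the support of a given `α ∈ F'` is `α`.
-/

section PiSingle

variable {ι : Type*} [DecidableEq ι]

lemma eq_single_of_le_single {α : ι → ℕ} {i : ι} {c : ℕ} (h : α ≤ Pi.single i c) :
    α = Pi.single i (α i) := by
  funext j
  by_cases hji : j = i
  · subst hji
    simp
  · simpa [Pi.single_eq_of_ne hji] using h j

lemma eq_single_add_single_of_le {α : ι → ℕ} {i k : ι} {a b : ℕ} (hik : i ≠ k)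
    (h : α ≤ Pi.single i a + Pi.single k b) :
    α = Pi.single i (α i) + Pi.single k (α k) := by
  funext j
  by_cases hji : j = i
  · subst hji
    simp [Pi.single_eq_of_ne hik]
  · by_cases hjk : j = k
    · subst hjk
      simp [Pi.single_eq_of_ne hji]
    · simpa [Pi.single_eq_of_ne hji, Pi.single_eq_of_ne hjk] using h j

end PiSingle

section

variable {n : ℕ}

lemma deg_add (α β : Fin n → ℕ) : deg (α + β) = deg α + deg β :=
  Finset.sum_add_distrib

lemma deg_single (i : Fin n) (c : ℕ) : deg (Pi.single i c : Fin n → ℕ) = c := by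
  simp [deg]

lemma exists_ne_zero_of_deg_ne_zero {α : Fin n → ℕ} (h : deg α ≠ 0) : ∃ i, α i ≠ 0 := by
  obtain ⟨i, -, hi⟩ := Finset.exists_ne_zero_of_sum_ne_zero h
  exact ⟨i, hi⟩

lemma brieskorn_pham_shape_of_le_single_add_single {α : Fin n → ℕ} {i k : Fin n} {m : ℕ}
    (hdeg : 2 ≤ deg α) (hk : α k ≠ 0) (hle : α ≤ Pi.single i m + Pi.single k 1) :
    α i ≠ 0 ∧
      ((∃ m : ℕ, 2 ≤ m ∧ α = Pi.single i m) ∨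
        (∃ j : Fin n, ∃ m : ℕ, 1 ≤ m ∧ i ≠ j ∧ α = Pi.single i m + Pi.single j 1)) := by
  by_cases hki : k = i
  · subst hki
    rw [← Pi.single_add] at hle
    have hα := eq_single_of_le_single hle
    rw [hα, deg_single] at hdeg
    exact ⟨by omega, Or.inl ⟨α k, hdeg, hα⟩⟩
  · have hα := eq_single_add_single_of_le (Ne.symm hki) hle
    have hk1 : α k = 1 :=
      le_antisymm (by simpa [Pi.single_eq_of_ne hki] using hle k) (Nat.one_le_iff_ne_zero.mpr hk)
    rw [hk1] at hα
    rw [hα, deg_add, deg_single, deg_single] at hdeg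
    exact ⟨by omega, Or.inr ⟨k, α i, by omega, Ne.symm hki, hα⟩⟩

lemma exists_brieskorn_pham_of_single_mem_semigroupIdeal {F : Set (Fin n → ℕ)}
    (hdeg : ∀ α ∈ F, 2 ≤ deg α) {i : Fin n} {m : ℕ}
    (h : (Pi.single i m : Fin n → ℕ) ∈ semigroupIdeal F) :
    ∃ α ∈ F, α i ≠ 0 ∧
      ((∃ m : ℕ, 2 ≤ m ∧ α = Pi.single i m) ∨
        (∃ j : Fin n, ∃ m : ℕ, 1 ≤ m ∧ i ≠ j ∧ α = Pi.single i m + Pi.single j 1)) := by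
  obtain ⟨_, ⟨α, hαF, k, hk, rfl⟩, hle⟩ := h
  exact ⟨α, hαF,
    brieskorn_pham_shape_of_le_single_add_single (hdeg α hαF) hk (tsub_le_iff_right.mp hle)⟩

end

/-- Combinatorial version of K. Saito's criterion for isolated singularities:
if a Thom–Sebastiani support `F'` (pairwise disjoint supports, all degrees
`≥ 2`) satisfies `m·e_i ∈ J_{F'}` for every `i`, then the supports of `F'`
cover `Fin n` and every `α ∈ F'` is of the form `m·e_i` with `m ≥ 2` or
`m·e_i + e_j` with `m ≥ 1`, `i ≠ j`. -/
theorem brieskorn_pham_criterion {n : ℕ} (F' : Set (Fin n → ℕ))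
    (hdisj : F'.Pairwise fun α α' => Disjoint (Function.support α) (Function.support α'))
    (hdeg : ∀ α ∈ F', 2 ≤ deg α)
    (hiso : ∀ i : Fin n, ∃ m : ℕ, (Pi.single i m : Fin n → ℕ) ∈ semigroupIdeal F') :
    (⋃ α ∈ F', Function.support α) = Set.univ ∧
    ∀ α ∈ F',
      (∃ i : Fin n, ∃ m : ℕ, 2 ≤ m ∧ α = Pi.single i m) ∨
      (∃ i j : Fin n, ∃ m : ℕ, 1 ≤ m ∧ i ≠ j ∧
        α = Pi.single i m + Pi.single j 1) := by
  have key i := exists_brieskorn_pham_of_single_mem_semigroupIdeal hdeg (hiso i).choose_spec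
  refine ⟨Set.eq_univ_of_forall fun i => ?_, fun α hαF => ?_⟩
  · obtain ⟨α, hαF, hαi, -⟩ := key i
    exact Set.mem_biUnion hαF hαi
  · obtain ⟨i, hi⟩ := exists_ne_zero_of_deg_ne_zero (α := α) (by have := hdeg α hαF; omega)
    obtain ⟨α', hα'F, hα'i, hshape⟩ := key i
    obtain rfl : α = α' :=
      Set.PairwiseDisjoint.elim_set hdisj hαF hα'F i hi hα'i
    exact hshape.imp (⟨i, ·⟩) (⟨i, ·⟩)
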